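/- Let D be a subspace of F(X) ⊗̂_π F(Y) and let E be an injective Banach space (every bounded linear operator into E from a subspace of a Banach space extends to the whole space with the same norm). Then the quotient BLip₀(X,Y;E)/◇D is isometrically isomorphic to L(D, E), via the map sending T + ◇D to the restriction of T_L to D. -/

import Mathlib

/-!
The restriction `T ↦ T_L|_D` is a norm-nonincreasing linear map `BLip₀(X,Y;E) → L(D,E)` with
kernel `◇D`. Injectivity of `E` extends any `S ∈ L(D,E)` to `S̃ ∈ L(F(X) ⊗̂_π F(Y), E)` of the same
norm, so `S` has a preimage of norm `‖S‖`. A norm-nonincreasing map with norm-preserving lifts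
induces an isometry from the quotient by its kernel onto its target.
-/

/-- The pre-annihilator `◇D = {T : T_L vanishes on D}`, where `J : T ↦ T_L`. -/
def preAnn {B Z E : Type} [NormedAddCommGroup B] [NormedSpace ℝ B]
    [NormedAddCommGroup Z] [NormedSpace ℝ Z] [NormedAddCommGroup E] [NormedSpace ℝ E]
    (J : B ≃ₗᵢ[ℝ] (Z →L[ℝ] E)) (D : Submodule ℝ Z) : Submodule ℝ B where
  carrier := {T | ∀ ξ ∈ D, J T ξ = 0}
  zero_mem' := by intro ξ _; simp
  add_mem' := by
    intro a b ha hb ξ hξ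
    simp [map_add, ContinuousLinearMap.add_apply, ha ξ hξ, hb ξ hξ]
  smul_mem' := by
    intro c a ha ξ hξ
    simp [map_smul, ContinuousLinearMap.smul_apply, ha ξ hξ]

section QuotientIsometry

variable {R B F : Type*} [Ring R] [SeminormedAddCommGroup B] [Module R B]
  [SeminormedAddCommGroup F] [Module R F]

theorem Submodule.Quotient.norm_mk_eq_of_lift {N : Submodule R B} (φ : B →ₗ[R] F)
    (hN : LinearMap.ker φ = N) (hφ : ∀ x, ‖φ x‖ ≤ ‖x‖)
    (hlift : ∀ y, ∃ x, φ x = y ∧ ‖x‖ ≤ ‖y‖) (x : B) :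
    ‖(Submodule.Quotient.mk x : B ⧸ N)‖ = ‖φ x‖ := by
  refine le_antisymm ?_ ?_
  · obtain ⟨x', hx', hx'_norm⟩ := hlift (φ x)
    have hmk : (Submodule.Quotient.mk x' : B ⧸ N) = Submodule.Quotient.mk x := by
      rw [Submodule.Quotient.eq, ← hN, LinearMap.mem_ker, map_sub, hx', sub_self]
    exact hmk ▸ (Submodule.Quotient.norm_mk_le N x').trans hx'_norm
  · refine QuotientAddGroup.le_norm_iff.2 fun x' hx' => ?_
    have hx'x : x' - x ∈ N := (Submodule.Quotient.eq N).1 hx'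
    rw [← hN, LinearMap.mem_ker, map_sub, sub_eq_zero] at hx'x
    exact hx'x ▸ hφ x'

noncomputable def Submodule.quotientLinearIsometryEquivOfLift (N : Submodule R B)
    (φ : B →ₗ[R] F) (hN : LinearMap.ker φ = N) (hφ : ∀ x, ‖φ x‖ ≤ ‖x‖)
    (hlift : ∀ y, ∃ x, φ x = y ∧ ‖x‖ ≤ ‖y‖) : (B ⧸ N) ≃ₗᵢ[R] F where
  toLinearEquiv := (N.quotEquivOfEq _ hN.symm).trans
    (φ.quotKerEquivOfSurjective fun y => (hlift y).imp fun _ => And.left)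
  norm_map' := by
    rintro ⟨x⟩
    exact (Submodule.Quotient.norm_mk_eq_of_lift φ hN hφ hlift x).symm

@[simp]
theorem Submodule.quotientLinearIsometryEquivOfLift_mk (N : Submodule R B) (φ : B →ₗ[R] F)
    (hN : LinearMap.ker φ = N) (hφ : ∀ x, ‖φ x‖ ≤ ‖x‖)
    (hlift : ∀ y, ∃ x, φ x = y ∧ ‖x‖ ≤ ‖y‖) (x : B) :
    N.quotientLinearIsometryEquivOfLift φ hN hφ hlift (Submodule.Quotient.mk x) = φ x :=
  rfl

end QuotientIsometry

section Restriction

variable {B Z E : Type} [NormedAddCommGroup B] [NormedSpace ℝ B]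
  [NormedAddCommGroup Z] [NormedSpace ℝ Z] [NormedAddCommGroup E] [NormedSpace ℝ E]

noncomputable def restrictLinearization (J : B ≃ₗᵢ[ℝ] (Z →L[ℝ] E)) (D : Submodule ℝ Z) :
    B →ₗ[ℝ] (D →L[ℝ] E) :=
  (ContinuousLinearMap.compL ℝ D Z E).flip D.subtypeL ∘ₗ J.toLinearEquiv.toLinearMap

theorem restrictLinearization_apply (J : B ≃ₗᵢ[ℝ] (Z →L[ℝ] E)) (D : Submodule ℝ Z) (T : B)
    (ξ : D) : restrictLinearization J D T ξ = J T ξ :=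
  rfl

theorem ker_restrictLinearization (J : B ≃ₗᵢ[ℝ] (Z →L[ℝ] E)) (D : Submodule ℝ Z) :
    LinearMap.ker (restrictLinearization J D) = preAnn J D := by
  ext T
  simp only [LinearMap.mem_ker, ContinuousLinearMap.ext_iff, Subtype.forall,
    restrictLinearization_apply, zero_apply]
  rfl

theorem norm_restrictLinearization_le (J : B ≃ₗᵢ[ℝ] (Z →L[ℝ] E)) (D : Submodule ℝ Z) (T : B) :
    ‖restrictLinearization J D T‖ ≤ ‖T‖ :=
  ContinuousLinearMap.opNorm_le_bound _ (norm_nonneg T) fun ξ =>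
    (J.norm_map T ▸ (J T).le_opNorm ξ :)

end Restriction

theorem stmt_15_general {B Z E : Type} [NormedAddCommGroup B] [NormedSpace ℝ B]
    [NormedAddCommGroup Z] [NormedSpace ℝ Z] [CompleteSpace Z]
    [NormedAddCommGroup E] [NormedSpace ℝ E]
    (hinj : ∀ (W : Type) [NormedAddCommGroup W] [NormedSpace ℝ W] [CompleteSpace W],
      ∀ (V : Submodule ℝ W) (S : V →L[ℝ] E),
        ∃ S' : W →L[ℝ] E, ‖S'‖ = ‖S‖ ∧ ∀ v : V, S' (v : W) = S v)
    (J : B ≃ₗᵢ[ℝ] (Z →L[ℝ] E)) (D : Submodule ℝ Z) :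
    ∃ e : (B ⧸ preAnn J D) ≃ₗᵢ[ℝ] (D →L[ℝ] E),
      ∀ (T : B) (ξ : D), e (Submodule.Quotient.mk T) ξ = J T (ξ : Z) := by
  have hlift : ∀ S, ∃ T, restrictLinearization J D T = S ∧ ‖T‖ ≤ ‖S‖ := fun S => by
    obtain ⟨S', hS'_norm, hS'_ext⟩ := hinj Z D S
    exact ⟨J.symm S', ContinuousLinearMap.ext fun ξ => by
      rw [restrictLinearization_apply, J.apply_symm_apply, hS'_ext], by simp [hS'_norm]⟩
  exact ⟨(preAnn J D).quotientLinearIsometryEquivOfLift (restrictLinearization J D)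
    (ker_restrictLinearization J D) (norm_restrictLinearization_le J D) hlift, fun T ξ => by
      rw [Submodule.quotientLinearIsometryEquivOfLift_mk, restrictLinearization_apply]⟩

/-- here `B` stands for the Banach space `BLip₀(X,Y;E)`, `Z` for
`F(X) ⊗̂_π F(Y)`, and `J : B ≃ₗᵢ L(Z,E)` for the isometric isomorphism `T ↦ T_L`.
If `D` is a subspace of `Z` and `E` is an injective Banach space (hypothesis `hinj`:
operators into `E` extend from subspaces with equal norm), then the quotient
`BLip₀(X,Y;E)/◇D` is isometrically isomorphic to `L(D,E)` via
`T + ◇D ↦ T_L|_D`. -/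
theorem stmt_15 {B Z E : Type} [NormedAddCommGroup B] [NormedSpace ℝ B] [CompleteSpace B]
    [NormedAddCommGroup Z] [NormedSpace ℝ Z] [CompleteSpace Z]
    [NormedAddCommGroup E] [NormedSpace ℝ E] [CompleteSpace E]
    (hinj : ∀ (W : Type) [NormedAddCommGroup W] [NormedSpace ℝ W] [CompleteSpace W],
      ∀ (V : Submodule ℝ W) (S : V →L[ℝ] E),
        ∃ S' : W →L[ℝ] E, ‖S'‖ = ‖S‖ ∧ ∀ v : V, S' (v : W) = S v)
    (J : B ≃ₗᵢ[ℝ] (Z →L[ℝ] E)) (D : Submodule ℝ Z) :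
    ∃ e : (B ⧸ preAnn J D) ≃ₗᵢ[ℝ] (D →L[ℝ] E),
      ∀ (T : B) (ξ : D), e (Submodule.Quotient.mk T) ξ = J T (ξ : Z) :=
  stmt_15_general hinj J D
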